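/- Let J be a finite nilpotent group acting by automorphisms on a finite nilpotent group N. For each prime q ∈ D (primes dividing both |J| and |N|), the map H¹(J_q, N_q) → H¹(J_q, N) induced by the inclusion N_q ↪ N is a bijection, where J_q, N_q denote the Sylow q-subgroups. -/

import Mathlib

section

variable {N J : Type*} [Group N] [Group J] (φ : J →* MulAut N)

/-- Crossed homomorphisms `J → N`. -/
def CrossedHom : Type _ := {f : J → N // ∀ j j', f (j * j') = f j * φ j (f j')}

/-- The cohomology relation on crossed homomorphisms. -/
def cohRel (f g : CrossedHom φ) : Prop :=
  ∃ n : N, ∀ j, g.1 j = n⁻¹ * f.1 j * φ j n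

/-- Crossed homomorphisms `J → N` taking values in a subgroup `M ≤ N`. -/
def CrossedHomIn (M : Subgroup N) : Type _ :=
  {f : J → N // (∀ j j', f (j * j') = f j * φ j (f j')) ∧ ∀ j, f j ∈ M}

/-- The cohomology relation for `M`-valued crossed homomorphisms. -/
def cohRelIn (M : Subgroup N) (f g : CrossedHomIn φ M) : Prop :=
  ∃ n ∈ M, ∀ j, g.1 j = n⁻¹ * f.1 j * φ j n

end

/-!
Surjectivity: a crossed homomorphism `g` on the `q`-group `J_q` is the same as the `q`-subgroup
`{(g j, j)}` of `N ⋊ J_q`. By Sylow's theorems it lies in a conjugate of the Sylow subgroup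
`N_q ⋊ J_q`, and the `N`-component `c` of the conjugator makes `c⁻¹ * g j * φ j c` land in `N_q`.

Injectivity: since `N` is nilpotent, write `n = a * b` with `a ∈ N_q` and `b` a `q'`-element
centralising `N_q`. If `n` relates two `N_q`-valued crossed homomorphisms, then `b⁻¹ * φ j b` is a
`q`-element commuting with `b`, and comparing orders of `φ j b = b * (b⁻¹ * φ j b)` and `b` shows
that it is trivial; hence `a` alone relates them.
-/

lemma IsPGroup.eq_one_of_pow_eq_one {p : ℕ} {G : Type*} [Group G] (hG : IsPGroup p G) {n : ℕ}
    (hn : p.Coprime n) {g : G} (hg : g ^ n = 1) : g = 1 :=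
  orderOf_eq_one_iff.mp ((hG.orderOf_coprime hn g).eq_one_of_dvd (orderOf_dvd_of_pow_eq_one hg))

lemma commute_of_pow_eq_one_of_coprime {G : Type*} [Group G] [Finite G] [Group.IsNilpotent G]
    {m n : ℕ} (hmn : m.Coprime n) {x y : G} (hx : x ^ m = 1) (hy : y ^ n = 1) : Commute x y := by
  let e := Sylow.directProductOfNormal (G := G) fun _ => inferInstance
  suffices Commute (e.symm x) (e.symm y) by simpa using this.map e
  refine Pi.commute_iff.mpr fun p => Pi.commute_iff.mpr fun P => ?_
  have hp := Nat.prime_of_mem_primeFactors p.2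
  have : Fact (p : ℕ).Prime := ⟨hp⟩
  have component_pow {k : ℕ} {z : G} (hz : z ^ k = 1) : e.symm z p P ^ k = 1 := by
    rw [← Pi.pow_apply, ← Pi.pow_apply, ← map_pow, hz, map_one, Pi.one_apply, Pi.one_apply]
  rcases Nat.coprime_or_dvd_of_prime hp m with hpm | hpm
  · rw [P.isPGroup'.eq_one_of_pow_eq_one hpm (component_pow hx)]
    exact Commute.one_left _
  · rw [P.isPGroup'.eq_one_of_pow_eq_one (hmn.coprime_dvd_left hpm) (component_pow hy)]
    exact Commute.one_right _

lemma Sylow.mem_of_pow_card_eq_one {p : ℕ} [Fact p.Prime] {G : Type*} [Group G] [Finite G]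
    (P : Sylow p G) [P.Normal] {x : G} (hx : x ^ Nat.card P = 1) : x ∈ P := by
  show x ∈ (P : Subgroup G)
  rw [← QuotientGroup.eq_one_iff, ← pow_eq_one_iff_of_coprime P.card_coprime_index]
  refine ⟨by rw [← QuotientGroup.mk_pow, hx, QuotientGroup.mk_one], ?_⟩
  rw [Subgroup.index_eq_card]
  exact pow_card_eq_one'

lemma exists_mul_eq_of_pow_mul_eq_one {G : Type*} [Group G] {m n : ℕ} (hmn : m.Coprime n)
    {x : G} (hx : x ^ (m * n) = 1) : ∃ a b : G, a * b = x ∧ a ^ m = 1 ∧ b ^ n = 1 := by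
  have hx' : x ^ ((m * n : ℕ) : ℤ) = 1 := by rw [zpow_natCast, hx]
  refine ⟨x ^ (n * Nat.gcdB m n), x ^ (m * Nat.gcdA m n), ?_, ?_, ?_⟩
  · rw [← zpow_add, add_comm, ← Nat.gcd_eq_gcd_ab, hmn, Nat.cast_one, zpow_one]
  · rw [← zpow_natCast, ← zpow_mul, show (n * Nat.gcdB m n * m : ℤ) = (m * n : ℕ) * Nat.gcdB m n by
      push_cast; ring, zpow_mul, hx', one_zpow]
  · rw [← zpow_natCast, ← zpow_mul, show (m * Nat.gcdA m n * n : ℤ) = (m * n : ℕ) * Nat.gcdA m n by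
      push_cast; ring, zpow_mul, hx', one_zpow]

namespace SemidirectProduct

variable {N P : Type*} [Group N] [Group P] (ψ : P →* MulAut N)

instance [Finite N] [Finite P] : Finite (N ⋊[ψ] P) := Finite.of_equiv _ equivProd.symm

def graphHom (g : P → N) (hg : ∀ j k, g (j * k) = g j * ψ j (g k)) : P →* N ⋊[ψ] P where
  toFun j := ⟨g j, j⟩
  map_one' := by
    have h := hg 1 1
    simp only [mul_one, map_one, MulAut.one_apply] at h
    ext
    · simpa using h
    · rfl
  map_mul' j k := by ext <;> simp [hg]

def leftMemSubgroup (A : Subgroup N) (hA : ∀ j, ∀ a ∈ A, ψ j a ∈ A) : Subgroup (N ⋊[ψ] P) where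
  carrier := {x | x.left ∈ A}
  one_mem' := A.one_mem
  mul_mem' hx hy := A.mul_mem hx (hA _ _ hy)
  inv_mem' hx := hA _ _ (A.inv_mem hx)

lemma card_leftMemSubgroup (A : Subgroup N) (hA : ∀ j, ∀ a ∈ A, ψ j a ∈ A) :
    Nat.card (leftMemSubgroup ψ A hA) = Nat.card A * Nat.card P := by
  rw [← Nat.card_prod]
  exact Nat.card_congr
    { toFun x := (⟨x.1.left, x.2⟩, x.1.right)
      invFun y := ⟨⟨y.1, y.2⟩, y.1.2⟩
      left_inv _ := rfl
      right_inv _ := rfl }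

lemma index_leftMemSubgroup [Finite N] [Finite P] (A : Subgroup N)
    (hA : ∀ j, ∀ a ∈ A, ψ j a ∈ A) : (leftMemSubgroup ψ A hA).index = A.index := by
  have h := (leftMemSubgroup ψ A hA).card_mul_index
  rw [card_leftMemSubgroup, card, ← A.card_mul_index] at h
  exact Nat.eq_of_mul_eq_mul_left (Nat.mul_pos Nat.card_pos Nat.card_pos) (h.trans (by ring))

variable {p : ℕ} [Fact p.Prime]

def sylowOfLeftMem [Finite N] [Finite P] (hP : IsPGroup p P) (A : Sylow p N)
    (hA : ∀ j, ∀ a ∈ A, ψ j a ∈ A) : Sylow p (N ⋊[ψ] P) :=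
  IsPGroup.toSylow (P := leftMemSubgroup ψ A hA)
    (by
      obtain ⟨m, hm⟩ := IsPGroup.iff_card.mp A.isPGroup'
      obtain ⟨n, hn⟩ := IsPGroup.iff_card.mp hP
      exact IsPGroup.of_card (n := m + n) (by rw [card_leftMemSubgroup, hm, hn, pow_add]))
    (by rw [index_leftMemSubgroup]; exact A.not_dvd_index)

end SemidirectProduct

open SemidirectProduct in
theorem exists_inv_mul_mul_mem_sylow {p : ℕ} [Fact p.Prime] {N P : Type*} [Group N] [Group P]
    [Finite N] [Finite P] (hP : IsPGroup p P) (ψ : P →* MulAut N) (A : Sylow p N)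
    (hA : ∀ j, ∀ a ∈ A, ψ j a ∈ A) (g : P → N) (hg : ∀ j k, g (j * k) = g j * ψ j (g k)) :
    ∃ c : N, ∀ j, c⁻¹ * g j * ψ j c ∈ A := by
  obtain ⟨T, hT⟩ :=
    (hP.of_surjective _ (graphHom ψ g hg).rangeRestrict_surjective).exists_le_sylow
  obtain ⟨x, rfl⟩ := MulAction.exists_smul_eq (N ⋊[ψ] P) (sylowOfLeftMem ψ hP A hA) T
  refine ⟨x.left, fun j => ?_⟩
  have hj := hT ⟨j, rfl⟩
  rw [Sylow.coe_subgroup_smul, Subgroup.mem_pointwise_smul_iff_inv_smul_mem] at hj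
  simpa [sylowOfLeftMem, leftMemSubgroup, graphHom, mul_left, inv_left] using hA x.right _ hj

theorem exists_mem_sylow_inv_mul_mul_eq {p : ℕ} [Fact p.Prime] {N P : Type*} [Group N] [Group P]
    [Finite N] [Group.IsNilpotent N] (ψ : P →* MulAut N) (A : Sylow p N)
    (hA : ∀ j, ∀ a ∈ A, ψ j a ∈ A) {f₁ f₂ : P → N} (hf₁ : ∀ j, f₁ j ∈ A) (hf₂ : ∀ j, f₂ j ∈ A)
    {n : N} (hn : ∀ j, f₂ j = n⁻¹ * f₁ j * ψ j n) :
    ∃ a ∈ A, ∀ j, f₂ j = a⁻¹ * f₁ j * ψ j a := by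
  have hcop := A.card_coprime_index
  have pow_card_A {y : N} (hy : y ∈ A) : y ^ Nat.card A = 1 := by
    have := pow_card_eq_one' (G := A) (x := ⟨y, hy⟩)
    rwa [Subtype.ext_iff, Subgroup.coe_pow] at this
  obtain ⟨a, b, rfl, ha, hb⟩ := exists_mul_eq_of_pow_mul_eq_one hcop (x := n)
    (by rw [A.card_mul_index]; exact pow_card_eq_one')
  replace ha : a ∈ A := A.mem_of_pow_card_eq_one ha
  have hb_comm {y : N} (hy : y ∈ A) : Commute y b :=
    commute_of_pow_eq_one_of_coprime hcop (pow_card_A hy) hb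
  refine ⟨a, ha, fun j => ?_⟩
  set h := a⁻¹ * f₁ j * ψ j a
  have hh : h ∈ A := A.mul_mem (A.mul_mem (A.inv_mem ha) (hf₁ j)) (hA j a ha)
  set z := b⁻¹ * ψ j b
  have hf₂_eq : f₂ j = h * z := calc
    f₂ j = b⁻¹ * h * ψ j b := by simp only [hn j, map_mul, h, mul_inv_rev, mul_assoc]
    _ = h * z := by rw [(hb_comm hh).inv_right.eq.symm, mul_assoc]
  have hz : z ∈ A := by
    rw [show z = h⁻¹ * f₂ j by rw [hf₂_eq]; group]
    exact A.mul_mem (A.inv_mem hh) (hf₂ j)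
  have hψb : ψ j b = b * z := by simp [z]
  have hz1 : z = 1 := by
    refine (pow_eq_one_iff_of_coprime hcop).mp ⟨pow_card_A hz, ?_⟩
    have := congrArg (ψ j) hb
    rwa [map_pow, map_one, hψb, (hb_comm hz).symm.mul_pow, hb, one_mul] at this
  rw [hf₂_eq, hz1, mul_one]

section

variable {N J : Type*} [Group N] [Group J] (φ : J →* MulAut N) (M : Subgroup N)

def CrossedHomIn.toCrossedHom (f : CrossedHomIn φ M) : CrossedHom φ := ⟨f.1, f.2.1⟩

def CrossedHom.conj (g : CrossedHom φ) (c : N) : CrossedHom φ :=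
  ⟨fun j => c⁻¹ * g.1 j * φ j c, fun j k => by
    simp only [g.2 j k, map_mul, map_inv, MulAut.mul_apply]
    group⟩

lemma cohRel_equivalence : Equivalence (cohRel φ) where
  refl _ := ⟨1, fun _ => by simp⟩
  symm := fun ⟨n, hn⟩ => ⟨n⁻¹, fun j => by rw [hn j, map_inv]; group⟩
  trans := fun ⟨n, hn⟩ ⟨n', hn'⟩ => ⟨n * n', fun j => by rw [hn' j, hn j, map_mul]; group⟩

def cohomologyInclusion : Quot (cohRelIn φ M) → Quot (cohRel φ) :=
  Quot.map (CrossedHomIn.toCrossedHom φ M) fun _ _ ⟨n, _, hn⟩ => ⟨n, hn⟩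

theorem cohomologyInclusion_bijective {p : ℕ} [Fact p.Prime] [Finite N] [Group.IsNilpotent N]
    [Finite J] (hJ : IsPGroup p J) (A : Sylow p N) (hA : ∀ j, ∀ a ∈ A, φ j a ∈ A) :
    Function.Bijective (cohomologyInclusion φ A) := by
  constructor
  · rintro ⟨f₁⟩ ⟨f₂⟩ h
    obtain ⟨n, hn⟩ := (cohRel_equivalence φ).eqvGen_iff.mp (Quot.eqvGen_exact h)
    exact Quot.sound (exists_mem_sylow_inv_mul_mul_eq φ A hA f₁.2.2 f₂.2.2 hn)
  · rintro ⟨g⟩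
    obtain ⟨c, hc⟩ := exists_inv_mul_mul_mem_sylow hJ φ A hA g.1 g.2
    exact ⟨Quot.mk _ ⟨(g.conj φ c).1, (g.conj φ c).2, hc⟩, (Quot.sound ⟨c, fun _ => rfl⟩).symm⟩

end

theorem stmt_9_general {N J : Type*} [Group N] [Group J] [Finite N] [Finite J]
    [Group.IsNilpotent N]
    (φ : J →* MulAut N) (q : ℕ) (hq : q.Prime)
    (Jq : Sylow q J) (Nq : Sylow q N)
    (hNq : ∀ (j : J) (n : N), n ∈ (Nq : Subgroup N) → φ j n ∈ (Nq : Subgroup N)) :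
    ∃ e : Quot (cohRelIn (φ.comp (Jq : Subgroup J).subtype) (Nq : Subgroup N)) ≃
        Quot (cohRel (φ.comp (Jq : Subgroup J).subtype)),
      ∀ (f : CrossedHomIn (φ.comp (Jq : Subgroup J).subtype) (Nq : Subgroup N))
        (g : CrossedHom (φ.comp (Jq : Subgroup J).subtype)),
        g.1 = f.1 → e (Quot.mk _ f) = Quot.mk _ g := by
  have : Fact q.Prime := ⟨hq⟩
  exact ⟨Equiv.ofBijective _ (cohomologyInclusion_bijective _ Jq.isPGroup' Nq fun j => hNq j),
    fun f g hg => congrArg (Quot.mk _) (Subtype.ext hg.symm)⟩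

/-- For finite nilpotent `J`, `N` with `J` acting on `N`, and a prime `q` dividing
both `|J|` and `|N|`, the inclusion `N_q ↪ N` induces a bijection
`H¹(J_q, N_q) ≅ H¹(J_q, N)`, where `J_q`, `N_q` are the Sylow `q`-subgroups. -/
theorem stmt_9 {N J : Type*} [Group N] [Group J] [Finite N] [Finite J]
    [Group.IsNilpotent N] [Group.IsNilpotent J]
    (φ : J →* MulAut N) (q : ℕ) (hq : q.Prime)
    (hqJ : q ∣ Nat.card J) (hqN : q ∣ Nat.card N)
    (Jq : Sylow q J) (Nq : Sylow q N)
    (hNq : ∀ (j : J) (n : N), n ∈ (Nq : Subgroup N) → φ j n ∈ (Nq : Subgroup N)) :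
    ∃ e : Quot (cohRelIn (φ.comp (Jq : Subgroup J).subtype) (Nq : Subgroup N)) ≃
        Quot (cohRel (φ.comp (Jq : Subgroup J).subtype)),
      ∀ (f : CrossedHomIn (φ.comp (Jq : Subgroup J).subtype) (Nq : Subgroup N))
        (g : CrossedHom (φ.comp (Jq : Subgroup J).subtype)),
        g.1 = f.1 → e (Quot.mk _ f) = Quot.mk _ g :=
  stmt_9_general φ q hq Jq Nq hNq
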